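/- For any θ, θ′ ∈ Θ₊, a G-constellation F is θ-stable if and only if F is θ′-stable; that is, all parameters in the cone Θ₊ determine the same set of stable G-constellations (namely the G-clusters, so that M_θ = G-Hilb for all θ ∈ Θ₊). -/

import Mathlib

/-!
Common setup: `G`-constellations for a finite subgroup `G ⊆ GL(n,ℂ)`.

* `polyAct g` is the action of `g ∈ GL(n,ℂ)` on the polynomial ring
  `A = ℂ[x₁,…,xₙ]` given by `(g·f)(x) = f(g⁻¹·x)`.
* `GMod n G F` is a `G`-equivariant `A`-module structure on the ℂ-vector space `F`:
  an `A`-module structure `actA` (as a ℂ-algebra map `A →ₐ End ℂ F`), a `G`-action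
  `actG` by ℂ-linear automorphisms, and the compatibility `g·(f·v) = (g·f)·(g·v)`.
* `IrrChar G` is the set of irreducible complex characters of `G`.
* `multChar ρ χ` is the multiplicity `m_ρ` read off from a character `χ`,
  `thetaOfChar θ χ = Σ_ρ m_ρ(χ)·θ(ρ)`.
* `IsThetaParam G θ` says `θ ∈ Θ`, i.e. `Σ_ρ (dim ρ)·θ(ρ) = 0`;
  `IsThetaPlus G θ` says `θ ∈ Θ₊`.
* `M.IsSub E` says the ℂ-subspace `E` is a `G`-submodule; `M.subChar E h` is the
  character of the induced `G`-representation on `E`.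
* `M.IsConstellation` : `F` is finite dimensional and isomorphic, as a
  `ℂ[G]`-module, to the regular representation `Map(G,ℂ)`.
* `M.IsStable θ` / `M.IsSemistable θ` : `θ(E) > 0` (resp. `≥ 0`) for every
  `G`-submodule `0 ≠ E ≠ F`.
* `IsGHom M M' φ` : `φ` is simultaneously `A`-linear and `G`-equivariant.
-/

open CategoryTheory

noncomputable section

/-- The action of `g ∈ GL(n,ℂ)` on polynomials, `(g·f)(x) = f(g⁻¹·x)`:
the variable `xᵢ` is replaced by `∑ⱼ (g⁻¹)ᵢⱼ xⱼ`. -/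
def polyAct {n : ℕ} (g : GL (Fin n) ℂ) :
    MvPolynomial (Fin n) ℂ →ₐ[ℂ] MvPolynomial (Fin n) ℂ :=
  MvPolynomial.aeval fun i =>
    ∑ j : Fin n, ((g⁻¹ : GL (Fin n) ℂ) : Matrix (Fin n) (Fin n) ℂ) i j • MvPolynomial.X j

/-- A `G`-equivariant module over `A = ℂ[x₁,…,xₙ]` on the ℂ-vector space `F`. -/
structure GMod (n : ℕ) (G : Subgroup (GL (Fin n) ℂ)) (F : Type)
    [AddCommGroup F] [Module ℂ F] : Type where
  actA : MvPolynomial (Fin n) ℂ →ₐ[ℂ] Module.End ℂ F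
  actG : G →* (F ≃ₗ[ℂ] F)
  equivariance : ∀ (g : G) (f : MvPolynomial (Fin n) ℂ) (v : F),
    actG g (actA f v) = actA (polyAct (g : GL (Fin n) ℂ) f) (actG g v)

/-- The irreducible complex characters of `G`. -/
def IrrChar {n : ℕ} (G : Subgroup (GL (Fin n) ℂ)) : Type :=
  {χ : G → ℂ // ∃ V : FDRep ℂ G, Simple V ∧ ∀ g : G, FDRep.character V g = χ g}

/-- The multiplicity `m_ρ` of the irreducible character `ρ` in a character `χ`,
computed by the usual inner product of characters. -/
def multChar {n : ℕ} {G : Subgroup (GL (Fin n) ℂ)} (ρ : IrrChar G) (χ : G → ℂ) : ℂ :=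
  (Nat.card G : ℂ)⁻¹ * ∑ᶠ g : G, ρ.1 g⁻¹ * χ g

/-- `θ(E) = Σ_ρ m_ρ(E)·θ(ρ)`, computed from the character of `E`. -/
def thetaOfChar {n : ℕ} {G : Subgroup (GL (Fin n) ℂ)}
    (θ : IrrChar G → ℚ) (χ : G → ℂ) : ℂ :=
  ∑ᶠ ρ : IrrChar G, multChar ρ χ * (θ ρ : ℂ)

/-- `θ ∈ Θ`, i.e. `Σ_ρ (dim ρ)·θ(ρ) = 0` (note `dim ρ = ρ(1)`). -/
def IsThetaParam {n : ℕ} (G : Subgroup (GL (Fin n) ℂ)) (θ : IrrChar G → ℚ) : Prop :=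
  ∑ᶠ ρ : IrrChar G, ρ.1 1 * (θ ρ : ℂ) = 0

/-- `θ ∈ Θ₊`, i.e. `θ ∈ Θ` and `θ(ρ) > 0` for every nontrivial `ρ ∈ Irr(G)`. -/
def IsThetaPlus {n : ℕ} (G : Subgroup (GL (Fin n) ℂ)) (θ : IrrChar G → ℚ) : Prop :=
  IsThetaParam G θ ∧ ∀ ρ : IrrChar G, ρ.1 ≠ (fun _ => (1 : ℂ)) → 0 < θ ρ

namespace GMod

variable {n : ℕ} {G : Subgroup (GL (Fin n) ℂ)} {F F' : Type}
  [AddCommGroup F] [Module ℂ F] [AddCommGroup F'] [Module ℂ F']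

/-- The character of the `G`-representation `F`. -/
def char (M : GMod n G F) : G → ℂ :=
  fun g => LinearMap.trace ℂ F ↑(M.actG g)

/-- `E` is a `G`-submodule: a subspace stable under the `A`-action and the `G`-action. -/
def IsSub (M : GMod n G F) (E : Submodule ℂ F) : Prop :=
  (∀ (f : MvPolynomial (Fin n) ℂ) (v : F), v ∈ E → M.actA f v ∈ E) ∧
  (∀ (g : G) (v : F), v ∈ E → M.actG g v ∈ E)

/-- The character of the `G`-representation on a `G`-stable subspace `E`. -/
def subChar (M : GMod n G F) (E : Submodule ℂ F)
    (h : ∀ (g : G) (v : F), v ∈ E → M.actG g v ∈ E) : G → ℂ :=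
  fun g => LinearMap.trace ℂ E
    ((↑(M.actG g) : F →ₗ[ℂ] F).restrict (p := E) (q := E) (fun v hv => by exact h g v hv))

/-- `F` is a `G`-constellation: finite dimensional and isomorphic as a `ℂ[G]`-module
to the regular representation `Map(G,ℂ)` (with `(g·φ)(h) = φ(g⁻¹h)`). -/
def IsConstellation (M : GMod n G F) : Prop :=
  FiniteDimensional ℂ F ∧
  ∃ e : F ≃ₗ[ℂ] (G → ℂ), ∀ (g : G) (v : F) (h : G), e (M.actG g v) h = e v (g⁻¹ * h)

/-- `θ`-stability: `θ(E) > 0` for every `G`-submodule `0 ≠ E ≠ F`. -/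
def IsStable (M : GMod n G F) (θ : IrrChar G → ℚ) : Prop :=
  ∀ (E : Submodule ℂ F) (hE : M.IsSub E), E ≠ ⊥ → E ≠ ⊤ →
    0 < (thetaOfChar θ (M.subChar E hE.2)).re

/-- `θ`-semistability: `θ(E) ≥ 0` for every `G`-submodule `0 ≠ E ≠ F`. -/
def IsSemistable (M : GMod n G F) (θ : IrrChar G → ℚ) : Prop :=
  ∀ (E : Submodule ℂ F) (hE : M.IsSub E), E ≠ ⊥ → E ≠ ⊤ →
    0 ≤ (thetaOfChar θ (M.subChar E hE.2)).re

/-- The subspace `F^G` of `G`-invariant vectors. -/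
def invariants (M : GMod n G F) : Submodule ℂ F where
  carrier := {v | ∀ g : G, M.actG g v = v}
  add_mem' := by
    intro a b ha hb
    intro g
    rw [map_add, ha g, hb g]
  zero_mem' := by
    intro g
    rw [map_zero]
  smul_mem' := by
    intro c v hv
    intro g
    rw [map_smul, hv g]

/-- The `A`-submodule of `F` generated by a subset `s ⊆ F`. -/
def aspan (M : GMod n G F) (s : Set F) : Submodule ℂ F :=
  Submodule.span ℂ {w | ∃ (f : MvPolynomial (Fin n) ℂ) (v : F), v ∈ s ∧ w = M.actA f v}

end GMod

/-- `φ : F → F'` is simultaneously `A`-linear and `G`-equivariant. -/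
def IsGHom {n : ℕ} {G : Subgroup (GL (Fin n) ℂ)} {F F' : Type}
    [AddCommGroup F] [Module ℂ F] [AddCommGroup F'] [Module ℂ F']
    (M : GMod n G F) (M' : GMod n G F') (φ : F →ₗ[ℂ] F') : Prop :=
  (∀ (f : MvPolynomial (Fin n) ℂ) (v : F), φ (M.actA f v) = M'.actA f (φ v)) ∧
  (∀ (g : G) (v : F), φ (M.actG g v) = M'.actG g (φ v))

end

/-!
For `θ ∈ Θ₊` and a `G`-submodule `0 ≠ E ≠ F`, Maschke's theorem gives a `G`-stable complement
`E'` of `E`, and the characters of `E` and `E'` are sums of irreducible characters. Since `F` is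
the regular representation, `θ(E) + θ(E') = θ(F) = Σ_ρ (dim ρ) θ(ρ) = 0` and the trivial
character occurs exactly once in `E ⊕ E'`. If it does not occur in `E`, then `θ(E)` is a
nonempty sum of positive numbers; if it does, it does not occur in `E'`, so `θ(E) = -θ(E') < 0`.
Hence `F` is `θ`-stable iff no such `E` contains the trivial representation, a condition that
does not depend on `θ`.
-/

open Module

universe u

theorem LinearMap.trace_eq_trace_restrict_add_trace_restrict_of_isCompl {K V : Type*} [Field K]
    [AddCommGroup V] [Module K V] [FiniteDimensional K V] {p q : Submodule K V} (h : IsCompl p q)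
    (f : V →ₗ[K] V) (hp : Set.MapsTo f p p) (hq : Set.MapsTo f q q) :
    trace K V f = trace K p (f.restrict hp) + trace K q (f.restrict hq) := by
  have hint : DirectSum.IsInternal fun b : Bool => cond b p q :=
    (DirectSum.isInternal_submodule_iff_isCompl _ (i := true) (j := false) (by decide)
      (by ext b; cases b <;> simp)).mpr h
  rw [trace_eq_sum_trace_restrict hint (f := f) (fun b => by cases b <;> assumption),
    Fintype.sum_bool]
  rfl

theorem LinearMap.trace_funLeft_mul_left {K G : Type*} [Field K] [Group G] [Finite G]
    [DecidableEq G] (g : G) :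
    trace K (G → K) (funLeft K K (g * ·)) = if g = 1 then (Nat.card G : K) else 0 := by
  have := Fintype.ofFinite G
  rw [trace_eq_matrix_trace K (Pi.basisFun K G), Matrix.trace]
  simp only [Matrix.diag_apply, toMatrix_apply, Pi.basisFun_repr, Pi.basisFun_apply,
    funLeft_apply, Pi.single_apply, mul_eq_right]
  split_ifs <;> simp [Nat.card_eq_fintype_card]

namespace Subrepresentation

variable {k G V : Type*} [Field k] [Monoid G] [AddCommGroup V] [Module k V]
  {ρ : Representation k G V}

theorem toSubmodule_strictMono :
    StrictMono (toSubmodule : Subrepresentation ρ → Submodule k V) :=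
  fun _ _ => id

instance [FiniteDimensional k V] : WellFoundedLT (Subrepresentation ρ) :=
  toSubmodule_strictMono.wellFoundedLT

theorem nontrivial_of_ne_bot {p : Subrepresentation ρ} (hp : p ≠ ⊥) : Nontrivial p.toSubmodule :=
  Submodule.nontrivial_iff_ne_bot.mpr fun h => hp (toSubmodule_injective h)

theorem isCompl_toSubmodule {p q : Subrepresentation ρ} (h : IsCompl p q) :
    IsCompl p.toSubmodule q.toSubmodule :=
  ⟨disjoint_iff.mpr (congrArg toSubmodule h.inf_eq_bot),
    codisjoint_iff.mpr (congrArg toSubmodule h.sup_eq_top)⟩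

theorem character_eq_add_of_isCompl [FiniteDimensional k V] {p q : Subrepresentation ρ}
    (h : IsCompl p q) :
    ρ.character = p.toRepresentation.character + q.toRepresentation.character :=
  funext fun g => LinearMap.trace_eq_trace_restrict_add_trace_restrict_of_isCompl
    (isCompl_toSubmodule h) (ρ g) (p.apply_mem_toSubmodule g) (q.apply_mem_toSubmodule g)

def mapSubtype (p : Subrepresentation ρ) (q : Subrepresentation p.toRepresentation) :
    Subrepresentation ρ where
  toSubmodule := q.toSubmodule.map p.toSubmodule.subtype
  apply_mem_toSubmodule := by
    rintro g _ ⟨x, hx, rfl⟩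
    exact ⟨_, q.apply_mem_toSubmodule g hx, rfl⟩

theorem mapSubtype_injective (p : Subrepresentation ρ) : Function.Injective p.mapSubtype :=
  fun _ _ h => toSubmodule_injective <|
    Submodule.map_injective_of_injective p.toSubmodule.injective_subtype (congrArg toSubmodule h)

@[simp] theorem mapSubtype_bot (p : Subrepresentation ρ) : p.mapSubtype ⊥ = ⊥ :=
  toSubmodule_injective (Submodule.map_bot _)

@[simp] theorem mapSubtype_top (p : Subrepresentation ρ) : p.mapSubtype ⊤ = p :=
  toSubmodule_injective (Submodule.map_subtype_top _)

theorem mapSubtype_le (p : Subrepresentation ρ) (q : Subrepresentation p.toRepresentation) :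
    p.mapSubtype q ≤ p := by
  rintro _ ⟨x, -, rfl⟩
  exact x.2

theorem isIrreducible_toRepresentation {p : Subrepresentation ρ} (hp : IsAtom p) :
    p.toRepresentation.IsIrreducible where
  exists_pair_ne := ⟨⊥, ⊤, fun h => hp.1 (by simpa using congrArg p.mapSubtype h.symm)⟩
  eq_bot_or_eq_top q := by
    rcases hp.le_iff.mp (p.mapSubtype_le q) with h | h
    · exact .inl (p.mapSubtype_injective (by simpa using h))
    · exact .inr (p.mapSubtype_injective (by simpa using h))

end Subrepresentation

theorem FDRep.simple_of_isIrreducible {k G V : Type u} [Field k] [IsAlgClosed k] [Group G]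
    [Finite G] [NeZero (Nat.card G : k)] [AddCommGroup V] [Module k V] [FiniteDimensional k V]
    (ρ : Representation k G V) [ρ.IsIrreducible] : Simple (FDRep.of ρ) := by
  rw [simple_iff_end_is_rank_one, ← (Representation.linHom.invariantsEquivFDRepHom _ _).finrank_eq,
    FDRep.of_ρ', (Representation.invariantsEquivIntertwiningMap ρ ρ).finrank_eq,
    Representation.IsIrreducible.finrank_intertwiningMap_self]

namespace IrrChar

variable {n : ℕ} {G : Subgroup (GL (Fin n) ℂ)}

open scoped Classical

def sumChar (s : Multiset (IrrChar G)) : G → ℂ := (s.map fun σ : IrrChar G => σ.1).sum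

@[simp] theorem sumChar_zero : sumChar (0 : Multiset (IrrChar G)) = 0 := rfl

@[simp] theorem sumChar_cons (σ : IrrChar G) (s : Multiset (IrrChar G)) :
    sumChar (σ ::ₘ s) = σ.1 + sumChar s := by
  rw [sumChar, Multiset.map_cons, Multiset.sum_cons]; rfl

@[simp] theorem sumChar_add (s t : Multiset (IrrChar G)) :
    sumChar (s + t) = sumChar s + sumChar t := by
  rw [sumChar, Multiset.map_add, Multiset.sum_add]; rfl

theorem exists_character_eq_sumChar [Finite G] {V : Type} [AddCommGroup V] [Module ℂ V]
    [FiniteDimensional ℂ V] (ρ : Representation ℂ G V) :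
    ∃ s : Multiset (IrrChar G), ρ.character = sumChar s := by
  induction hd : finrank ℂ V using Nat.strong_induction_on generalizing V with
  | _ d ih =>
  rcases subsingleton_or_nontrivial V with _ | _
  · exact ⟨0, funext fun g => by simp [Representation.character, Subsingleton.elim (ρ g) 0]⟩
  have htop : (⊤ : Subrepresentation ρ) ≠ ⊥ :=
    fun h => top_ne_bot (congrArg Subrepresentation.toSubmodule h)
  obtain ⟨p, hp, -⟩ := (eq_bot_or_exists_atom_le (⊤ : Subrepresentation ρ)).resolve_left htop
  obtain ⟨q, hpq⟩ := exists_isCompl p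
  have := Subrepresentation.isIrreducible_toRepresentation hp
  let σ : IrrChar G := ⟨p.toRepresentation.character, FDRep.of p.toRepresentation,
    FDRep.simple_of_isIrreducible _, fun _ => rfl⟩
  have hdim := Submodule.finrank_add_eq_of_isCompl (Subrepresentation.isCompl_toSubmodule hpq)
  have hp0 : finrank ℂ p.toSubmodule ≠ 0 := fun h =>
    hp.1 (Subrepresentation.toSubmodule_injective (Submodule.finrank_eq_zero.mp h))
  obtain ⟨s, hs⟩ := ih _ (by omega) q.toRepresentation rfl
  refine ⟨σ ::ₘ s, ?_⟩
  rw [Subrepresentation.character_eq_add_of_isCompl hpq, hs, sumChar_cons]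

theorem ne_zero_of_character_eq_sumChar {V : Type} [AddCommGroup V] [Module ℂ V]
    [FiniteDimensional ℂ V] [Nontrivial V] {ρ : Representation ℂ G V} {s : Multiset (IrrChar G)}
    (h : ρ.character = sumChar s) : s ≠ 0 := by
  rintro rfl
  have := congrFun h 1
  rw [Representation.char_one, sumChar_zero, Pi.zero_apply, Nat.cast_eq_zero] at this
  exact Module.finrank_pos.ne' this

theorem multChar_add [Finite G] (ρ : IrrChar G) (χ₁ χ₂ : G → ℂ) :
    multChar ρ (χ₁ + χ₂) = multChar ρ χ₁ + multChar ρ χ₂ := by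
  simp only [multChar, Pi.add_apply, mul_add,
    finsum_add_distrib (Set.toFinite _) (Set.toFinite _)]

theorem multChar_single_one [Finite G] (ρ : IrrChar G) (c : ℂ) :
    multChar ρ (Pi.single 1 c) = (Nat.card G : ℂ)⁻¹ * (ρ.1 1 * c) := by
  rw [multChar, finsum_eq_single _ 1 fun g hg => by simp [hg], inv_one, Pi.single_eq_same]

theorem multChar_eq_ite_nonempty_iso [Finite G] (ρ σ : IrrChar G) (V W : FDRep ℂ G)
    [Simple V] [Simple W] (hV : ∀ g, V.character g = ρ.1 g) (hW : ∀ g, W.character g = σ.1 g) :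
    multChar ρ σ.1 = if Nonempty (W ≅ V) then 1 else 0 := by
  have := Fintype.ofFinite G
  have := invertibleOfNonzero (NeZero.ne (Nat.card G : ℂ))
  rw [← FDRep.char_orthonormal, multChar, finsum_eq_sum_of_fintype]
  simp only [← hV, ← hW, mul_comm]

theorem multChar_self [Finite G] (ρ : IrrChar G) : multChar ρ ρ.1 = 1 := by
  obtain ⟨V, _, hV⟩ := ρ.2
  rw [multChar_eq_ite_nonempty_iso ρ ρ V V hV hV, if_pos ⟨Iso.refl V⟩]

theorem multChar_of_ne [Finite G] {ρ σ : IrrChar G} (h : ρ ≠ σ) : multChar ρ σ.1 = 0 := by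
  obtain ⟨V, _, hV⟩ := ρ.2
  obtain ⟨W, _, hW⟩ := σ.2
  rw [multChar_eq_ite_nonempty_iso ρ σ V W hV hW, if_neg]
  rintro ⟨e⟩
  exact h (Subtype.ext (funext fun g => by rw [← hV, ← hW, FDRep.char_iso e]))

theorem multChar_sumChar [Finite G] (ρ : IrrChar G) (s : Multiset (IrrChar G)) :
    multChar ρ (sumChar s) = s.count ρ := by
  induction s using Multiset.induction_on with
  | empty => simp [multChar]
  | cons σ s ih =>
    rw [sumChar_cons, multChar_add, ih, Multiset.count_cons]
    rcases eq_or_ne ρ σ with rfl | h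
    · simp [multChar_self, add_comm]
    · simp [multChar_of_ne h, h]

theorem thetaOfChar_sumChar [Finite G] (θ : IrrChar G → ℚ) (s : Multiset (IrrChar G)) :
    thetaOfChar θ (sumChar s) = ((s.map θ).sum : ℚ) := by
  rw [thetaOfChar, finsum_eq_sum_of_support_subset (s := s.toFinset),
    Finset.sum_multiset_map_count]
  · push_cast
    simp [multChar_sumChar]
  · intro ρ hρ
    simp_all [multChar_sumChar]

theorem sum_map_pos {θ : IrrChar G → ℚ} (hθ : ∀ ρ : IrrChar G, ρ.1 ≠ (fun _ => 1) → 0 < θ ρ)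
    {s : Multiset (IrrChar G)} (hs : s ≠ 0) (hnt : ∀ σ ∈ s, σ.1 ≠ fun _ => 1) :
    0 < (s.map θ).sum := by
  simpa using Multiset.sum_lt_sum_of_nonempty (f := fun _ => 0) hs fun σ hσ => hθ σ (hnt σ hσ)

theorem sum_map_pos_iff {θ : IrrChar G → ℚ} (hθ : ∀ ρ : IrrChar G, ρ.1 ≠ (fun _ => 1) → 0 < θ ρ)
    {s t : Multiset (IrrChar G)} (hs : s ≠ 0) (ht : t ≠ 0) (hsum : ((s + t).map θ).sum = 0)
    (hcount : ∀ ρ : IrrChar G, ρ.1 = (fun _ => 1) → (s + t).count ρ = 1) :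
    0 < (s.map θ).sum ↔ ∀ σ ∈ s, σ.1 ≠ fun _ => 1 := by
  refine ⟨fun hpos σ hσ hσ₀ => ?_, sum_map_pos hθ hs⟩
  have hnt : ∀ τ ∈ t, τ.1 ≠ fun _ => 1 := by
    rintro τ hτ hτ₀
    obtain rfl : τ = σ := Subtype.ext (hτ₀.trans hσ₀.symm)
    have := hcount τ hτ₀
    rw [Multiset.count_add] at this
    have := Multiset.count_pos.mpr hσ
    have := Multiset.count_pos.mpr hτ
    omega
  have := sum_map_pos hθ ht hnt
  rw [Multiset.map_add, Multiset.sum_add] at hsum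
  linarith

theorem thetaOfChar_re_pos_iff [Finite G] {θ : IrrChar G → ℚ} (hθ : IsThetaPlus G θ) {V : Type}
    [AddCommGroup V] [Module ℂ V] [FiniteDimensional ℂ V] {ρ : Representation ℂ G V}
    (hρ : ρ.character = Pi.single 1 (Nat.card G : ℂ)) {p : Subrepresentation ρ} (hbot : p ≠ ⊥)
    (htop : p ≠ ⊤) :
    0 < (thetaOfChar θ p.toRepresentation.character).re ↔
      ∀ ρ₀ : IrrChar G, ρ₀.1 = (fun _ => 1) → multChar ρ₀ p.toRepresentation.character = 0 := by
  obtain ⟨q, hpq⟩ := exists_isCompl p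
  obtain ⟨s, hs⟩ := exists_character_eq_sumChar p.toRepresentation
  obtain ⟨t, ht⟩ := exists_character_eq_sumChar q.toRepresentation
  have hst : ρ.character = sumChar (s + t) := by
    rw [Subrepresentation.character_eq_add_of_isCompl hpq, hs, ht, sumChar_add]
  have hmult (σ : IrrChar G) : multChar σ (sumChar (s + t)) = σ.1 1 := by
    rw [← hst, hρ, multChar_single_one, mul_comm (σ.1 1), inv_mul_cancel_left₀ (NeZero.ne _)]
  have hsum : ((s + t).map θ).sum = 0 := by
    have h := thetaOfChar_sumChar θ (s + t)
    rw [thetaOfChar, finsum_congr fun σ => by rw [hmult], hθ.1] at h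
    exact_mod_cast h.symm
  have hcount (σ : IrrChar G) (hσ : σ.1 = fun _ => 1) : (s + t).count σ = 1 := by
    have := hmult σ
    simp only [multChar_sumChar, hσ] at this
    exact_mod_cast this
  have := Subrepresentation.nontrivial_of_ne_bot hbot
  have := Subrepresentation.nontrivial_of_ne_bot fun h => htop (eq_top_of_isCompl_bot (h ▸ hpq))
  rw [hs, thetaOfChar_sumChar, Complex.ratCast_re, Rat.cast_pos,
    sum_map_pos_iff hθ.2 (ne_zero_of_character_eq_sumChar hs) (ne_zero_of_character_eq_sumChar ht)
      hsum hcount]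
  simp only [multChar_sumChar, Nat.cast_eq_zero, Multiset.count_eq_zero]
  exact ⟨fun h ρ₀ hρ₀ hmem => h ρ₀ hmem hρ₀, fun h σ hσ hσ₀ => h σ hσ₀ hσ⟩

end IrrChar

namespace GMod

variable {n : ℕ} {G : Subgroup (GL (Fin n) ℂ)} {F : Type} [AddCommGroup F] [Module ℂ F]

def rep (M : GMod n G F) : Representation ℂ G F :=
  LinearEquiv.automorphismGroup.toLinearMapMonoidHom.comp M.actG

def IsSub.toSubrepresentation {M : GMod n G F} {E : Submodule ℂ F} (hE : M.IsSub E) :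
    Subrepresentation M.rep :=
  ⟨E, hE.2⟩

open scoped Classical in
theorem IsConstellation.character_rep [Finite G] {M : GMod n G F} (hM : M.IsConstellation) :
    M.rep.character = Pi.single 1 (Nat.card G : ℂ) := by
  obtain ⟨_, e, he⟩ := hM
  funext g
  have hconj : M.rep g = e.symm.conj (LinearMap.funLeft ℂ ℂ (g⁻¹ * ·)) := by
    ext v
    apply e.injective
    funext h
    simp [LinearEquiv.conj_apply, rep, he]
  rw [Representation.character, hconj, LinearMap.trace_conj', LinearMap.trace_funLeft_mul_left]
  simp [Pi.single_apply]

end GMod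

/-- For any `θ, θ′ ∈ Θ₊`, a `G`-constellation is `θ`-stable if and only if
it is `θ′`-stable: all parameters in `Θ₊` determine the same stable objects. -/
theorem stmt2 {n : ℕ} {G : Subgroup (GL (Fin n) ℂ)} [Finite G]
    (θ θ' : IrrChar G → ℚ) (hθ : IsThetaPlus G θ) (hθ' : IsThetaPlus G θ')
    {F : Type} [AddCommGroup F] [Module ℂ F] (M : GMod n G F)
    (hcon : M.IsConstellation) :
    M.IsStable θ ↔ M.IsStable θ' := by
  have := hcon.1
  have hreg := hcon.character_rep
  refine forall₂_congr fun E hE => imp_congr_right fun hbot => imp_congr_right fun htop => ?_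
  have hbot' : hE.toSubrepresentation ≠ ⊥ :=
    fun h => hbot (congrArg Subrepresentation.toSubmodule h)
  have htop' : hE.toSubrepresentation ≠ ⊤ :=
    fun h => htop (congrArg Subrepresentation.toSubmodule h)
  exact (IrrChar.thetaOfChar_re_pos_iff hθ hreg hbot' htop').trans
    (IrrChar.thetaOfChar_re_pos_iff hθ' hreg hbot' htop').symm
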